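/- Every strongly minimal UCRPQ Γ is minimal: no UCRPQ equivalent to Γ has all disjuncts with strictly fewer atoms than the maximum number of atoms over disjuncts of Γ. -/

import Mathlib

/-- A graph database over alphabet `A`: an edge-labelled directed graph. -/
structure DB (A : Type) where
  V : Type
  edge : V → A → V → Prop

/-- `G.path w u v`: there is a directed path from `u` to `v` labelled by the word `w`. -/
def DB.path {A : Type} (G : DB A) : List A → G.V → G.V → Prop
  | [], u, v => u = v
  | a :: w, u, v => ∃ x, G.edge u a x ∧ DB.path G w x v

/-- A finite directed multigraph with a distinguished set of output vertices. -/
structure MGraph where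
  V : Type
  E : Type
  src : E → V
  tgt : E → V
  out : Set V

namespace MGraph

/-- An internal vertex: a non-output vertex of in-degree 1 and out-degree 1. -/
def Internal (G : MGraph) (v : G.V) : Prop :=
  v ∉ G.out ∧ (∃! e, G.tgt e = v) ∧ (∃! e, G.src e = v)

def External (G : MGraph) (v : G.V) : Prop := ¬ G.Internal v

/-- A list of edges forms a directed walk. -/
def IsWalk (G : MGraph) : List G.E → Prop
  | [] => True
  | [_] => True
  | e₁ :: e₂ :: es => G.tgt e₁ = G.src e₂ ∧ G.IsWalk (e₂ :: es)

/-- The list of vertices visited by a walk. -/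
def walkVerts (G : MGraph) : List G.E → List G.V
  | [] => []
  | e :: es => G.src e :: G.tgt e :: es.map G.tgt

/-- A one-way internal path: a nonempty simple directed path all of whose intermediate
vertices are internal (the first and last vertex may coincide). -/
def IsInternalPath (G : MGraph) (es : List G.E) : Prop :=
  es ≠ [] ∧ G.IsWalk es ∧
  (∀ v ∈ (G.walkVerts es).tail.dropLast, G.Internal v) ∧
  (G.walkVerts es).tail.Nodup ∧ (G.walkVerts es).dropLast.Nodup

/-- A segment: a maximal one-way internal path. -/
def IsSegment (G : MGraph) (es : List G.E) : Prop :=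
  G.IsInternalPath es ∧ (∀ e, ¬ G.IsInternalPath (e :: es)) ∧
  (∀ e, ¬ G.IsInternalPath (es ++ [e]))

def firstV (G : MGraph) (es : List G.E) : Option G.V := es.head?.map G.src

def lastV (G : MGraph) (es : List G.E) : Option G.V := es.getLast?.map G.tgt

end MGraph

/-- The number of segments of a multigraph, counting segments as sets of edges. -/
noncomputable def segCount (G : MGraph) : ℕ :=
  {S : Set G.E | ∃ es, G.IsSegment es ∧ S = {e | e ∈ es}}.ncard

/-- A conjunctive regular path query: a finite directed multigraph whose edges (atoms)
are labelled by languages, with a tuple of output variables. -/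
structure CRPQ (A : Type) (n : ℕ) where
  V : Type
  I : Type
  finV : Finite V
  finI : Finite I
  src : I → V
  tgt : I → V
  lang : I → Set (List A)
  out : Fin n → V

/-- Satisfaction of a CRPQ on a database at an output tuple. -/
def CRPQ.sat {A : Type} {n : ℕ} (γ : CRPQ A n) (G : DB A) (t : Fin n → G.V) : Prop :=
  ∃ h : γ.V → G.V, (∀ k, h (γ.out k) = t k) ∧
    ∀ i, ∃ w ∈ γ.lang i, G.path w (h (γ.src i)) (h (γ.tgt i))

/-- A choice of expansion words: one word from each atom language. -/
def CRPQ.IsExpansionWords {A : Type} {n : ℕ} (γ : CRPQ A n) (w : γ.I → List A) : Prop :=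
  ∀ i, w i ∈ γ.lang i

/-- Satisfaction of the expansion of `γ` determined by the words `w`. -/
def CRPQ.expSat {A : Type} {n : ℕ} (γ : CRPQ A n) (w : γ.I → List A) (G : DB A)
    (t : Fin n → G.V) : Prop :=
  ∃ h : γ.V → G.V, (∀ k, h (γ.out k) = t k) ∧ ∀ i, G.path (w i) (h (γ.src i)) (h (γ.tgt i))

/-- A CQ is a CRPQ all of whose atom languages are single-letter singletons. -/
def CRPQ.IsCQ {A : Type} {n : ℕ} (η : CRPQ A n) : Prop := ∀ i, ∃ a : A, η.lang i = {[a]}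

/-- Vertices of the expansion of `γ` along `w`, before identifying endpoints of
empty-word atoms: original variables plus fresh intermediate path variables. -/
def CanonBase {A : Type} {n : ℕ} (γ : CRPQ A n) (w : γ.I → List A) : Type :=
  γ.V ⊕ (Σ i : γ.I, Fin ((w i).length - 1))

/-- The `k`-th vertex on the expansion path of atom `i`. -/
def nodeAt {A : Type} {n : ℕ} (γ : CRPQ A n) (w : γ.I → List A) (i : γ.I) (k : ℕ) :
    CanonBase γ w :=
  if h : 0 < k ∧ k < (w i).length then Sum.inr ⟨i, ⟨k - 1, by omega⟩⟩
  else if k = 0 then Sum.inl (γ.src i) else Sum.inl (γ.tgt i)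

/-- Identifications forced by empty-word atoms. -/
def canonRel {A : Type} {n : ℕ} (γ : CRPQ A n) (w : γ.I → List A) :
    CanonBase γ w → CanonBase γ w → Prop :=
  fun u v => ∃ i, w i = [] ∧ u = Sum.inl (γ.src i) ∧ v = Sum.inl (γ.tgt i)

/-- The canonical database of the expansion of `γ` along the words `w`. -/
def canonDB {A : Type} {n : ℕ} (γ : CRPQ A n) (w : γ.I → List A) : DB A where
  V := Quot (canonRel γ w)
  edge u a v := ∃ (i : γ.I) (k : ℕ) (hk : k < (w i).length),
    (w i).get ⟨k, hk⟩ = a ∧ u = Quot.mk _ (nodeAt γ w i k) ∧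
      v = Quot.mk _ (nodeAt γ w i (k + 1))

/-- The canonical output tuple of the canonical database. -/
def canonOut {A : Type} {n : ℕ} (γ : CRPQ A n) (w : γ.I → List A) :
    Fin n → (canonDB γ w).V :=
  fun k => Quot.mk (canonRel γ w) (Sum.inl (γ.out k))

/-- A labelled CQ: a finite directed multigraph with letter-labelled edges and outputs. -/
structure LCQ (A : Type) (n : ℕ) where
  V : Type
  E : Type
  finV : Finite V
  finE : Finite E
  src : E → V
  tgt : E → V
  lab : E → A
  out : Fin n → V

/-- A homomorphism of labelled CQs: preserves edges, labels and outputs pointwise. -/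
def LCQHom {A : Type} {n : ℕ} (P Q : LCQ A n) (fV : P.V → Q.V) (fE : P.E → Q.E) : Prop :=
  (∀ e, Q.src (fE e) = fV (P.src e)) ∧ (∀ e, Q.tgt (fE e) = fV (P.tgt e)) ∧
  (∀ e, Q.lab (fE e) = P.lab e) ∧ (∀ k, fV (P.out k) = Q.out k)

def LCQ.HomTo {A : Type} {n : ℕ} (P Q : LCQ A n) : Prop := ∃ fV fE, LCQHom P Q fV fE

def HomEquiv {A : Type} {n : ℕ} (P Q : LCQ A n) : Prop := P.HomTo Q ∧ Q.HomTo P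

/-- `C` is a core of `P`: hom-equivalent to `P`, and every endomorphism of `C`
is an automorphism. -/
def IsCoreOf {A : Type} {n : ℕ} (C P : LCQ A n) : Prop :=
  HomEquiv C P ∧
    ∀ fV fE, LCQHom C C fV fE → Function.Bijective fV ∧ Function.Bijective fE

/-- The expansion of `γ` along the words `w`, as a labelled CQ. -/
def expLCQ {A : Type} {n : ℕ} (γ : CRPQ A n) (w : γ.I → List A) : LCQ A n where
  V := Quot (canonRel γ w)
  E := Σ i : γ.I, Fin ((w i).length)
  finV := by
    haveI := γ.finV; haveI := γ.finI
    haveI : Finite (CanonBase γ w) := by unfold CanonBase; infer_instance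
    exact Finite.of_surjective (Quot.mk (canonRel γ w))
      (fun q => Quot.inductionOn q fun a => ⟨a, rfl⟩)
  finE := by haveI := γ.finI; infer_instance
  src e := Quot.mk _ (nodeAt γ w e.1 e.2.1)
  tgt e := Quot.mk _ (nodeAt γ w e.1 (e.2.1 + 1))
  lab e := (w e.1).get e.2
  out k := Quot.mk _ (Sum.inl (γ.out k))

/-- The underlying multigraph of a labelled CQ. -/
def LCQ.toMGraph {A : Type} {n : ℕ} (P : LCQ A n) : MGraph :=
  ⟨P.V, P.E, P.src, P.tgt, Set.range P.out⟩

/-- The underlying multigraph of a CRPQ. -/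
def CRPQ.toMGraph {A : Type} {n : ℕ} (γ : CRPQ A n) : MGraph :=
  ⟨γ.V, γ.I, γ.src, γ.tgt, Set.range γ.out⟩

/-- The maximum number of atoms of a disjunct of a union of CRPQs. -/
noncomputable def maxAtoms {A : Type} {n : ℕ} (Γ : List (CRPQ A n)) : ℕ :=
  (Γ.map fun γ => Nat.card γ.I).foldr max 0

/-!
Applying the equivalence of `Γ` and `Δ` to canonical databases, and then back, produces a
disjunct `δ` of `Δ` with an expansion `E` into which the hom-minimal expansion `ξ` maps and which
maps back into an expansion of `Γ`; hom-minimality makes `E` hom-equivalent to `ξ`, hence to its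
core `C`. Since every endomorphism of `C` is an automorphism, `C` is a retract of `E`. A vertex of
`C` lying over an interior vertex of the path of an atom of `δ` is then internal in `C`, so going
backwards along a segment of `C` one reaches an edge lying over the first edge of an atom; two
segments reaching the same atom share an edge and coincide. Thus `C` has at most as many
segments as `δ` has atoms.
-/

namespace List

variable {α : Type*} {R : α → α → Prop} {p : α → Prop}

theorem isChain_and_iff : ∀ {l : List α},
    l.IsChain (fun a b => R a b ∧ p a) ↔ l.IsChain R ∧ ∀ a ∈ l.dropLast, p a
  | [] => by simp
  | [a] => by simp
  | a :: b :: l => by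
    rw [isChain_cons_cons, isChain_cons_cons, isChain_and_iff, dropLast_cons_cons,
      forall_mem_cons]
    tauto

theorem IsChain.forall_mem_of_mem {l : List α} (h : l.IsChain R)
    (fwd : ∀ ⦃a b⦄, R a b → p a → p b) (bwd : ∀ ⦃a b⦄, R a b → p b → p a)
    {x : α} (hx : x ∈ l) (hpx : p x) : ∀ y ∈ l, p y := by
  obtain ⟨s, t, rfl⟩ := append_of_mem hx
  intro y hy
  rcases mem_append.1 hy with hy | hy
  · exact (h.prefix ⟨t, by simp⟩).backwards_concat_induction p s bwd hpx y hy
  · exact (h.suffix ⟨s, rfl⟩).induction p _ fwd (fun _ => hpx) y hy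

end List

namespace MGraph

variable {G : MGraph} {es fs : List G.E} {e f z : G.E} {v : G.V}

theorem Internal.eq_of_tgt_eq (hv : G.Internal v) (he : G.tgt e = v) (hf : G.tgt f = v) :
    e = f :=
  hv.2.1.unique he hf

theorem Internal.eq_of_src_eq (hv : G.Internal v) (he : G.src e = v) (hf : G.src f = v) :
    e = f :=
  hv.2.2.unique he hf

def InternalStep (G : MGraph) (e f : G.E) : Prop :=
  G.tgt e = G.src f ∧ G.Internal (G.tgt e)

theorem isWalk_iff_isChain : ∀ {es : List G.E},
    G.IsWalk es ↔ es.IsChain (fun e f => G.tgt e = G.src f)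
  | [] => by simp [IsWalk]
  | [_] => by simp [IsWalk]
  | _ :: _ :: _ => by rw [IsWalk, List.isChain_cons_cons, isWalk_iff_isChain]

theorem isChain_internalStep_iff :
    es.IsChain G.InternalStep ↔ G.IsWalk es ∧ ∀ e ∈ es.dropLast, G.Internal (G.tgt e) :=
  List.isChain_and_iff.trans (by rw [isWalk_iff_isChain])

theorem walkVerts_tail (es : List G.E) : (G.walkVerts es).tail = es.map G.tgt := by
  cases es <;> rfl

theorem walkVerts_dropLast : ∀ {es : List G.E}, G.IsWalk es →
    (G.walkVerts es).dropLast = es.map G.src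
  | [], _ => rfl
  | [_], _ => rfl
  | e₁ :: e₂ :: es, hw => by
    have h : G.walkVerts (e₁ :: e₂ :: es) = G.src e₁ :: G.walkVerts (e₂ :: es) := by
      simp [walkVerts, hw.1]
    rw [h, List.dropLast_cons_of_ne_nil (by simp [walkVerts]), walkVerts_dropLast hw.2]
    rfl

theorem isInternalPath_iff : G.IsInternalPath es ↔
    es ≠ [] ∧ es.IsChain G.InternalStep ∧ (es.map G.tgt).Nodup ∧ (es.map G.src).Nodup := by
  rw [isChain_internalStep_iff, IsInternalPath, walkVerts_tail, ← List.map_dropLast,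
    List.forall_mem_map]
  constructor
  · rintro ⟨hne, hw, hint, htgt, hsrc⟩
    exact ⟨hne, ⟨hw, hint⟩, htgt, walkVerts_dropLast hw ▸ hsrc⟩
  · rintro ⟨hne, ⟨hw, hint⟩, htgt, hsrc⟩
    exact ⟨hne, hw, hint, htgt, (walkVerts_dropLast hw).symm ▸ hsrc⟩

theorem IsInternalPath.concat (h : G.IsInternalPath es) (hne : es ≠ [])
    (hlast : G.Internal (G.tgt (es.getLast hne))) (hz : G.src z = G.tgt (es.getLast hne))
    (hzes : z ∉ es) : G.IsInternalPath (es ++ [z]) := by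
  obtain ⟨-, hch, htgt, hsrc⟩ := isInternalPath_iff.1 h
  have htgtInt : ∀ e ∈ es, G.Internal (G.tgt e) :=
    hch.backwards_induction (fun e => G.Internal (G.tgt e)) es (fun _ _ hab _ => hab.2)
      (fun _ => hlast)
  refine isInternalPath_iff.2 ⟨by simp, ?_, ?_, ?_⟩
  · refine hch.append (List.isChain_singleton z) ?_
    simp only [List.getLast?_eq_some_getLast hne, Option.mem_def, Option.some.injEq,
      List.head?_cons, forall_eq']
    exact ⟨hz.symm, hlast⟩
  · rw [List.map_append, List.map_singleton, ← List.concat_eq_append]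
    refine htgt.concat fun hmem => hzes ?_
    obtain ⟨e, he, hez⟩ := List.mem_map.1 hmem
    exact (htgtInt e he).eq_of_tgt_eq rfl hez.symm ▸ he
  · rw [List.map_append, List.map_singleton, ← List.concat_eq_append]
    refine hsrc.concat fun hmem => hzes ?_
    obtain ⟨e, he, hez⟩ := List.mem_map.1 hmem
    exact hlast.eq_of_src_eq (hez.trans hz) hz ▸ he

theorem IsInternalPath.cons (h : G.IsInternalPath es) (hne : es ≠ [])
    (hhead : G.Internal (G.src (es.head hne))) (hz : G.tgt z = G.src (es.head hne))
    (hzes : z ∉ es) : G.IsInternalPath (z :: es) := by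
  obtain ⟨-, hch, htgt, hsrc⟩ := isInternalPath_iff.1 h
  have hsrcInt : ∀ e ∈ es, G.Internal (G.src e) :=
    hch.induction (fun e => G.Internal (G.src e)) es (fun _ _ hab _ => hab.1 ▸ hab.2)
      (fun _ => hhead)
  refine isInternalPath_iff.2 ⟨by simp, ?_, ?_, ?_⟩
  · refine hch.cons ?_
    simp only [List.head?_eq_some_head hne, Option.mem_def, Option.some.injEq, forall_eq']
    exact ⟨hz, hz ▸ hhead⟩
  · refine List.nodup_cons.2 ⟨fun hmem => hzes ?_, htgt⟩
    obtain ⟨e, he, hez⟩ := List.mem_map.1 hmem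
    exact hhead.eq_of_tgt_eq (hez.trans hz) hz ▸ he
  · refine List.nodup_cons.2 ⟨fun hmem => hzes ?_, hsrc⟩
    obtain ⟨e, he, hez⟩ := List.mem_map.1 hmem
    exact (hsrcInt e he).eq_of_src_eq rfl hez.symm ▸ he

theorem IsSegment.mem_of_src_eq_tgt (hseg : G.IsSegment es) (he : e ∈ es)
    (hv : G.Internal (G.tgt e)) (hz : G.src z = G.tgt e) : z ∈ es := by
  obtain ⟨hpath, -, hmax⟩ := hseg
  obtain ⟨j, hj, rfl⟩ := List.getElem_of_mem he
  by_cases hj1 : j + 1 < es.length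
  · have hstep := ((isInternalPath_iff.1 hpath).2.1.getElem j hj1).1
    exact hv.eq_of_src_eq hz hstep.symm ▸ List.getElem_mem hj1
  · have hne : es ≠ [] := List.ne_nil_of_mem he
    have hlast : es.getLast hne = es[j] := by
      rw [List.getLast_eq_getElem]
      congr 1
      omega
    by_contra hzes
    exact hmax z (hpath.concat hne (hlast ▸ hv) (hlast ▸ hz) hzes)

theorem IsSegment.mem_of_tgt_eq_src (hseg : G.IsSegment es) (he : e ∈ es)
    (hv : G.Internal (G.src e)) (hz : G.tgt z = G.src e) : z ∈ es := by
  obtain ⟨hpath, hmax, -⟩ := hseg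
  obtain ⟨j, hj, rfl⟩ := List.getElem_of_mem he
  cases j with
  | zero =>
    have hne : es ≠ [] := List.ne_nil_of_mem he
    have hhead : es.head hne = es[0] := List.head_eq_getElem hne
    by_contra hzes
    exact hmax z (hpath.cons hne (hhead ▸ hv) (hhead ▸ hz) hzes)
  | succ k =>
    have hstep := ((isInternalPath_iff.1 hpath).2.1.getElem k hj).1
    exact hv.eq_of_tgt_eq hz hstep ▸ List.getElem_mem (by omega)

theorem IsSegment.subset_of_mem (hes : G.IsSegment es) (hfs : G.IsSegment fs) (hx : e ∈ es)
    (hx' : e ∈ fs) : es ⊆ fs :=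
  (isInternalPath_iff.1 hes.1).2.1.forall_mem_of_mem
    (fun _ _ hab ha => hfs.mem_of_src_eq_tgt ha hab.2 hab.1.symm)
    (fun _ _ hab hb => hfs.mem_of_tgt_eq_src hb (hab.1 ▸ hab.2) hab.1) hx hx'

theorem IsSegment.edges_eq (hes : G.IsSegment es) (hfs : G.IsSegment fs) (hx : e ∈ es)
    (hx' : e ∈ fs) : {e | e ∈ es} = {e | e ∈ fs} :=
  Set.ext fun _ =>
    ⟨fun h => hes.subset_of_mem hfs hx hx' h, fun h => hfs.subset_of_mem hes hx' hx h⟩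

end MGraph

theorem segCount_le_natCard {G : MGraph} {ι : Type*} [Finite ι] (f : G.E → ι) {T : Set G.E}
    (hf : Set.InjOn f T) (hT : ∀ es, G.IsSegment es → ∃ x ∈ es, x ∈ T) :
    segCount G ≤ Nat.card ι := by
  rw [segCount, ← Nat.card_coe_set_eq]
  have hchoice : ∀ S : {S : Set G.E | ∃ es, G.IsSegment es ∧ S = {e | e ∈ es}},
      ∃ es x, G.IsSegment es ∧ (S : Set G.E) = {e | e ∈ es} ∧ x ∈ es ∧ x ∈ T := by
    rintro ⟨S, es, hes, rfl⟩
    obtain ⟨x, hx, hxT⟩ := hT es hes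
    exact ⟨es, x, hes, rfl, hx, hxT⟩
  choose es x hes hS hx hxT using hchoice
  refine Nat.card_le_card_of_injective (fun S => f (x S)) fun S₁ S₂ h => Subtype.ext ?_
  have hx₁₂ : x S₁ = x S₂ := hf (hxT S₁) (hxT S₂) h
  rw [hS, hS, (hes S₁).edges_eq (hes S₂) (hx S₁) (hx₁₂ ▸ hx S₂)]

section Expansion

variable {A : Type} {n : ℕ} {γ : CRPQ A n} {w : γ.I → List A}

theorem canon_mk_inr_eq {s : Σ i : γ.I, Fin ((w i).length - 1)} {c : CanonBase γ w}
    (h : Quot.mk (canonRel γ w) (Sum.inr s) = Quot.mk _ c) : Sum.inr s = c := by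
  -- `canonRel` only relates original variables, so `Sum.getRight?` descends to the quotient.
  have h' := congrArg (Quot.lift Sum.getRight? (by rintro _ _ ⟨i, -, rfl, rfl⟩; rfl)) h
  cases c <;> simp_all

theorem nodeAt_zero (i : γ.I) : nodeAt γ w i 0 = Sum.inl (γ.src i) := by
  unfold nodeAt CanonBase
  rw [dif_neg (by omega), if_pos rfl]

theorem nodeAt_succ_of_lt {i : γ.I} {k : ℕ} (hk : k + 1 < (w i).length) :
    nodeAt γ w i (k + 1) = Sum.inr ⟨i, ⟨k, by omega⟩⟩ := by
  unfold nodeAt CanonBase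
  rw [dif_pos ⟨k.succ_pos, hk⟩]
  rfl

theorem nodeAt_of_length_le {i : γ.I} {k : ℕ} (hk : (w i).length ≤ k) (h0 : 0 < k) :
    nodeAt γ w i k = Sum.inl (γ.tgt i) := by
  unfold nodeAt CanonBase
  rw [dif_neg (by omega), if_neg (by omega)]

theorem nodeAt_eq_inr {i : γ.I} {k : ℕ} {s : Σ i : γ.I, Fin ((w i).length - 1)}
    (h : nodeAt γ w i k = Sum.inr s) : s.1 = i ∧ (s.2 : ℕ) + 1 = k := by
  unfold nodeAt CanonBase at h
  split at h
  · cases h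
    exact ⟨rfl, by simp only; omega⟩
  · split at h <;> cases h

theorem expLCQ_tgt_eq_mk {i : γ.I} {l : ℕ} (hl : l + 1 < (w i).length) :
    (expLCQ γ w).tgt ⟨i, ⟨l, by omega⟩⟩ = Quot.mk _ (Sum.inr ⟨i, ⟨l, by omega⟩⟩) :=
  congrArg _ (nodeAt_succ_of_lt hl)

theorem expLCQ_src_succ {i : γ.I} {l : ℕ} (hl : l + 1 < (w i).length) :
    (expLCQ γ w).src ⟨i, ⟨l + 1, hl⟩⟩ = (expLCQ γ w).tgt ⟨i, ⟨l, by omega⟩⟩ :=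
  rfl

theorem expLCQ_eq_of_tgt_eq {i : γ.I} {l : ℕ} (hl : l + 1 < (w i).length)
    {e : (expLCQ γ w).E} (h : (expLCQ γ w).tgt e = (expLCQ γ w).tgt ⟨i, ⟨l, by omega⟩⟩) :
    e = ⟨i, ⟨l, by omega⟩⟩ := by
  obtain ⟨j, m, hm⟩ := e
  rw [expLCQ_tgt_eq_mk hl] at h
  obtain ⟨rfl, hml⟩ := nodeAt_eq_inr (canon_mk_inr_eq h.symm).symm
  simp only [Nat.add_right_cancel_iff] at hml
  subst hml
  rfl

theorem expLCQ_eq_of_src_eq {i : γ.I} {l : ℕ} (hl : l + 1 < (w i).length)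
    {e : (expLCQ γ w).E} (h : (expLCQ γ w).src e = (expLCQ γ w).src ⟨i, ⟨l + 1, hl⟩⟩) :
    e = ⟨i, ⟨l + 1, hl⟩⟩ := by
  obtain ⟨j, m, hm⟩ := e
  rw [expLCQ_src_succ hl, expLCQ_tgt_eq_mk hl] at h
  obtain ⟨rfl, rfl⟩ := nodeAt_eq_inr (canon_mk_inr_eq h.symm).symm
  rfl

theorem expLCQ_out_ne_tgt {i : γ.I} {l : ℕ} (hl : l + 1 < (w i).length) (k : Fin n) :
    (expLCQ γ w).out k ≠ (expLCQ γ w).tgt ⟨i, ⟨l, by omega⟩⟩ := by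
  rw [expLCQ_tgt_eq_mk hl]
  exact fun h => Sum.inr_ne_inl (canon_mk_inr_eq h.symm)

end Expansion

theorem DB.path.exists_vertices {A : Type} {G : DB A} :
    ∀ {word : List A} {u v : G.V}, G.path word u v →
      ∃ g : ℕ → G.V, g 0 = u ∧ g word.length = v ∧
        ∀ l (hl : l < word.length), G.edge (g l) word[l] (g (l + 1))
  | [], u, _, h => ⟨fun _ => u, rfl, h, fun _ hl => absurd hl (Nat.not_lt_zero _)⟩
  | a :: word, u, _, ⟨x, hx, hp⟩ => by
    obtain ⟨g, hg0, hglen, hge⟩ := hp.exists_vertices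
    refine ⟨fun l => Nat.casesOn l u g, rfl, hglen, fun l hl => ?_⟩
    cases l with
    | zero => simpa [hg0] using hx
    | succ l => exact hge l (by simpa using hl)

section Semantics

variable {A : Type} {n : ℕ}

theorem canonDB_path_drop {γ : CRPQ A n} (w : γ.I → List A) (i : γ.I) (k : ℕ) :
    (canonDB γ w).path ((w i).drop k) (Quot.mk _ (nodeAt γ w i k))
      (Quot.mk _ (Sum.inl (γ.tgt i))) := by
  by_cases hk : k < (w i).length
  · rw [List.drop_eq_getElem_cons hk]
    exact ⟨_, ⟨i, k, hk, rfl, rfl, rfl⟩, canonDB_path_drop w i (k + 1)⟩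
  · rw [List.drop_of_length_le (by omega)]
    rcases Nat.eq_zero_or_pos k with rfl | h0
    · exact Quot.sound ⟨i, List.length_eq_zero_iff.1 (by omega), nodeAt_zero i, rfl⟩
    · exact congrArg _ (nodeAt_of_length_le (by omega) h0)
termination_by (w i).length - k

theorem sat_canonDB {γ : CRPQ A n} {w : γ.I → List A} (hw : γ.IsExpansionWords w) :
    γ.sat (canonDB γ w) (canonOut γ w) :=
  ⟨fun v => Quot.mk _ (Sum.inl v), fun _ => rfl, fun i =>
    ⟨w i, hw i, by simpa [nodeAt_zero] using canonDB_path_drop w i 0⟩⟩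

theorem sumElim_nodeAt {γ : CRPQ A n} {w : γ.I → List A} {X : Type*} (f : γ.V → X)
    (g : γ.I → ℕ → X) {i : γ.I} (h0 : g i 0 = f (γ.src i))
    (hlen : g i (w i).length = f (γ.tgt i)) {k : ℕ} (hk : k ≤ (w i).length) :
    Sum.elim f (fun s => g s.1 (s.2 + 1)) (nodeAt γ w i k) = g i k := by
  cases k with
  | zero => rw [nodeAt_zero, Sum.elim_inl, h0]
  | succ k =>
    rcases Nat.lt_or_ge (k + 1) (w i).length with hlt | hge
    · rw [nodeAt_succ_of_lt hlt]
      rfl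
    · rw [nodeAt_of_length_le hge k.succ_pos, Sum.elim_inl, ← hlen,
        show k + 1 = (w i).length by omega]

theorem exists_homTo_of_sat_canonDB {η δ : CRPQ A n} {w : δ.I → List A}
    (h : η.sat (canonDB δ w) (canonOut δ w)) :
    ∃ u, η.IsExpansionWords u ∧ (expLCQ η u).HomTo (expLCQ δ w) := by
  obtain ⟨f, hout, hsat⟩ := h
  choose u hu hpath using hsat
  choose g hg0 hglen hge using fun i => (hpath i).exists_vertices
  choose j m hm hlab hsrc htgt using hge
  let F : CanonBase η u → (expLCQ δ w).V := Sum.elim f (fun s => g s.1 (s.2 + 1))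
  have hF : ∀ a b, canonRel η u a b → F a = F b := by
    rintro _ _ ⟨i, hui, rfl, rfl⟩
    have hp := hpath i
    rw [hui] at hp
    exact hp
  have hFnode : ∀ i k, k ≤ (u i).length → F (nodeAt η u i k) = g i k := fun i _ hk =>
    sumElim_nodeAt f g (hg0 i) (hglen i) hk
  refine ⟨u, hu, Quot.lift F hF, fun e => ⟨j e.1 e.2 e.2.2, ⟨m e.1 e.2 e.2.2, hm _ _ _⟩⟩,
    fun ⟨i, l, hl⟩ => ?_, fun ⟨i, l, hl⟩ => ?_, fun ⟨i, l, hl⟩ => hlab i l hl, hout⟩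
  · exact (hsrc i l hl).symm.trans (hFnode i l hl.le).symm
  · exact (htgt i l hl).symm.trans (hFnode i (l + 1) hl).symm

end Semantics

section Homs

variable {A : Type} {n : ℕ} {P Q R : LCQ A n}

theorem LCQHom.comp {fV fE gV gE} (hf : LCQHom P Q fV fE) (hg : LCQHom Q R gV gE) :
    LCQHom P R (gV ∘ fV) (gE ∘ fE) :=
  ⟨fun e => (hg.1 _).trans (congrArg gV (hf.1 e)),
    fun e => (hg.2.1 _).trans (congrArg gV (hf.2.1 e)),
    fun e => (hg.2.2.1 _).trans (hf.2.2.1 e),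
    fun k => (congrArg gV (hf.2.2.2 k)).trans (hg.2.2.2 k)⟩

theorem LCQ.HomTo.trans (h₁ : P.HomTo Q) (h₂ : Q.HomTo R) : P.HomTo R :=
  let ⟨_, _, hf⟩ := h₁
  let ⟨_, _, hg⟩ := h₂
  ⟨_, _, hf.comp hg⟩

theorem HomEquiv.trans (h₁ : HomEquiv P Q) (h₂ : HomEquiv Q R) : HomEquiv P R :=
  ⟨h₁.1.trans h₂.1, h₂.2.trans h₁.2⟩

theorem LCQHom.symm {fV fE} (hf : LCQHom P Q fV fE) (hV : Function.Bijective fV)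
    (hE : Function.Bijective fE) :
    LCQHom Q P (Equiv.ofBijective fV hV).symm (Equiv.ofBijective fE hE).symm := by
  refine ⟨fun e => ?_, fun e => ?_, fun e => ?_, fun k => ?_⟩
  · rw [eq_comm, Equiv.symm_apply_eq, Equiv.ofBijective_apply, ← hf.1,
      Equiv.ofBijective_apply_symm_apply fE hE]
  · rw [eq_comm, Equiv.symm_apply_eq, Equiv.ofBijective_apply, ← hf.2.1,
      Equiv.ofBijective_apply_symm_apply fE hE]
  · rw [← hf.2.2.1, Equiv.ofBijective_apply_symm_apply fE hE]
  · rw [Equiv.symm_apply_eq, Equiv.ofBijective_apply, hf.2.2.2]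

theorem exists_retraction_of_endo_bijective {C : LCQ A n}
    (hend : ∀ fV fE, LCQHom C C fV fE → Function.Bijective fV ∧ Function.Bijective fE)
    {ιV ιE} (hι : LCQHom C P ιV ιE) {ρV ρE} (hρ : LCQHom P C ρV ρE) :
    ∃ rV rE, LCQHom P C rV rE ∧ Function.LeftInverse rV ιV ∧ Function.LeftInverse rE ιE := by
  have hσ := hι.comp hρ
  obtain ⟨hV, hE⟩ := hend _ _ hσ
  exact ⟨_, _, hρ.comp (hσ.symm hV hE), (Equiv.ofBijective _ hV).symm_apply_apply,
    (Equiv.ofBijective _ hE).symm_apply_apply⟩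

end Homs

section Core

variable {A : Type} {n : ℕ} {δ : CRPQ A n} {w : δ.I → List A} {C : LCQ A n}
  {ιV : C.V → (expLCQ δ w).V} {ιE : C.E → (expLCQ δ w).E}
  {rV : (expLCQ δ w).V → C.V} {rE : (expLCQ δ w).E → C.E}

theorem internal_of_map_eq_tgt (hι : LCQHom C (expLCQ δ w) ιV ιE)
    (hr : LCQHom (expLCQ δ w) C rV rE) (hrιV : Function.LeftInverse rV ιV)
    (hrιE : Function.LeftInverse rE ιE) {i : δ.I} {l : ℕ} (hl : l + 1 < (w i).length)
    {v : C.V} (hv : ιV v = (expLCQ δ w).tgt ⟨i, ⟨l, by omega⟩⟩) :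
    C.toMGraph.Internal v := by
  refine ⟨?_, ⟨rE ⟨i, ⟨l, by omega⟩⟩, ?_, fun e he => ?_⟩,
    ⟨rE ⟨i, ⟨l + 1, hl⟩⟩, ?_, fun e he => ?_⟩⟩
  · rintro ⟨k, rfl⟩
    exact expLCQ_out_ne_tgt hl k ((hι.2.2.2 k).symm.trans hv)
  · exact (hr.2.1 _).trans (hv ▸ hrιV v)
  · exact (hrιE e).symm.trans (congrArg rE (expLCQ_eq_of_tgt_eq hl
      ((hι.2.1 e).trans ((congrArg ιV he).trans hv))))
  · exact (hr.1 _).trans (expLCQ_src_succ hl ▸ hv ▸ hrιV v)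
  · exact (hrιE e).symm.trans (congrArg rE (expLCQ_eq_of_src_eq hl
      ((hι.1 e).trans ((congrArg ιV he).trans hv))))

theorem exists_mem_map_eq_pred (hι : LCQHom C (expLCQ δ w) ιV ιE)
    (hr : LCQHom (expLCQ δ w) C rV rE) (hrιV : Function.LeftInverse rV ιV)
    (hrιE : Function.LeftInverse rE ιE) {es : List C.E} (hseg : C.toMGraph.IsSegment es)
    {x : C.E} (hx : x ∈ es) {i : δ.I} {l : ℕ} (hl : l + 1 < (w i).length)
    (hxι : ιE x = ⟨i, ⟨l + 1, hl⟩⟩) : ∃ x' ∈ es, ιE x' = ⟨i, ⟨l, by omega⟩⟩ := by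
  have hv : ιV (C.src x) = (expLCQ δ w).tgt ⟨i, ⟨l, by omega⟩⟩ := by
    rw [← hι.1, hxι, expLCQ_src_succ]
  have hprev : C.tgt (rE ⟨i, ⟨l, by omega⟩⟩) = C.src x := (hr.2.1 _).trans (hv ▸ hrιV _)
  refine ⟨_, hseg.mem_of_tgt_eq_src hx (internal_of_map_eq_tgt hι hr hrιV hrιE hl hv) hprev,
    expLCQ_eq_of_tgt_eq hl ?_⟩
  rw [hι.2.1, hprev, hv]

theorem exists_mem_map_snd_eq_zero (hι : LCQHom C (expLCQ δ w) ιV ιE)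
    (hr : LCQHom (expLCQ δ w) C rV rE) (hrιV : Function.LeftInverse rV ιV)
    (hrιE : Function.LeftInverse rE ιE) {es : List C.E} (hseg : C.toMGraph.IsSegment es) :
    ∃ x ∈ es, ((ιE x).2 : ℕ) = 0 := by
  suffices h : ∀ l, ∀ x ∈ es, ((ιE x).2 : ℕ) = l → ∃ x' ∈ es, ((ιE x').2 : ℕ) = 0 from
    h _ _ (List.head_mem hseg.1.1) rfl
  intro l
  induction l with
  | zero => exact fun x hx hx0 => ⟨x, hx, hx0⟩
  | succ l ih =>
    intro x hx hxl
    rcases hxι : ιE x with ⟨i, k, hk⟩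
    rw [hxι] at hxl
    subst hxl
    obtain ⟨x', hx', hx'ι⟩ := exists_mem_map_eq_pred hι hr hrιV hrιE hseg hx hk hxι
    exact ih x' hx' (by rw [hx'ι])

end Core

theorem segCount_le_card_of_homEquiv {A : Type} {n : ℕ} {δ : CRPQ A n} {w : δ.I → List A}
    {C : LCQ A n}
    (hend : ∀ fV fE, LCQHom C C fV fE → Function.Bijective fV ∧ Function.Bijective fE)
    (h : HomEquiv C (expLCQ δ w)) : segCount C.toMGraph ≤ Nat.card δ.I := by
  obtain ⟨⟨ιV, ιE, hι⟩, ⟨ρV, ρE, hρ⟩⟩ := h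
  obtain ⟨rV, rE, hr, hrιV, hrιE⟩ := exists_retraction_of_endo_bijective hend hι hρ
  have := δ.finI
  refine segCount_le_natCard (fun x => (ιE x).1) (T := {x | ((ιE x).2 : ℕ) = 0})
    (fun x hx y hy hxy => hrιE.injective ?_)
    (fun es hes => exists_mem_map_snd_eq_zero hι hr hrιV hrιE hes)
  exact Sigma.ext hxy ((Fin.heq_ext_iff (congrArg (fun i => (w i).length) hxy)).2
    (hx.trans hy.symm))

theorem exists_homEquiv_expansion_of_equiv {A : Type} {n : ℕ} {Γ Δ : List (CRPQ A n)}
    (hequiv : ∀ (G : DB A) (t : Fin n → G.V), (∃ γ ∈ Γ, γ.sat G t) ↔ (∃ δ ∈ Δ, δ.sat G t))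
    {γ : CRPQ A n} (hγ : γ ∈ Γ) {w : γ.I → List A} (hw : γ.IsExpansionWords w)
    (hmin : ∀ γ' ∈ Γ, ∀ w', γ'.IsExpansionWords w' →
      (expLCQ γ' w').HomTo (expLCQ γ w) → HomEquiv (expLCQ γ' w') (expLCQ γ w)) :
    ∃ δ ∈ Δ, ∃ w', δ.IsExpansionWords w' ∧ HomEquiv (expLCQ γ w) (expLCQ δ w') := by
  obtain ⟨δ, hδ, hδsat⟩ := (hequiv _ _).1 ⟨γ, hγ, sat_canonDB hw⟩
  obtain ⟨w', hw', hδγ⟩ := exists_homTo_of_sat_canonDB hδsat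
  obtain ⟨γ', hγ', hγ'sat⟩ := (hequiv _ _).2 ⟨δ, hδ, sat_canonDB hw'⟩
  obtain ⟨w'', hw'', hγ'δ⟩ := exists_homTo_of_sat_canonDB hγ'sat
  exact ⟨δ, hδ, w', hw', (hmin γ' hγ' w'' hw'' (hγ'δ.trans hδγ)).2.trans hγ'δ, hδγ⟩

theorem card_le_maxAtoms {A : Type} {n : ℕ} {Δ : List (CRPQ A n)} {δ : CRPQ A n}
    (hδ : δ ∈ Δ) : Nat.card δ.I ≤ maxAtoms Δ :=
  List.le_max_of_le' 0 (List.mem_map_of_mem hδ) le_rfl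

/-- Every strongly minimal UCRPQ is minimal: if `Γ` has a hom-minimal expansion whose
core has as many segments as the maximum number of atoms of a disjunct of `Γ`, then no
equivalent UCRPQ has all its disjuncts with strictly fewer atoms. -/
theorem strongly_minimal_implies_minimal {A : Type} {n : ℕ} (Γ : List (CRPQ A n))
    (hstrong : ∃ γ ∈ Γ, ∃ w, γ.IsExpansionWords w ∧
      (∀ γ' ∈ Γ, ∀ w', γ'.IsExpansionWords w' →
        (expLCQ γ' w').HomTo (expLCQ γ w) → HomEquiv (expLCQ γ' w') (expLCQ γ w)) ∧
      ∃ C : LCQ A n, IsCoreOf C (expLCQ γ w) ∧ segCount C.toMGraph = maxAtoms Γ) :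
    ∀ Δ : List (CRPQ A n),
      (∀ (G : DB A) (t : Fin n → G.V), (∃ γ ∈ Γ, γ.sat G t) ↔ (∃ δ ∈ Δ, δ.sat G t)) →
      maxAtoms Γ ≤ maxAtoms Δ := by
  obtain ⟨γ, hγ, w, hw, hmin, C, hcore, hseg⟩ := hstrong
  intro Δ hequiv
  obtain ⟨δ, hδ, w', -, hξ⟩ := exists_homEquiv_expansion_of_equiv hequiv hγ hw hmin
  calc maxAtoms Γ = segCount C.toMGraph := hseg.symm
    _ ≤ Nat.card δ.I := segCount_le_card_of_homEquiv hcore.2 (hcore.1.trans hξ)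
    _ ≤ maxAtoms Δ := card_le_maxAtoms hδ
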